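/- arXiv:2202.10920 — 3 statements merged into one kernel-verified Lean document; each statement's English description precedes it below -/
import Mathlib

section
/- Let η_1, …, η_n ∈ H²(A) with ht(η_i) < i for every i (i.e., η_i ∈ F_{i−1}(A)). If Σ_{i=1}^n η_i x_i = 0 in the Bott ring R_A, then η_i = 0 for all i. -/
open MvPolynomial

namespace Bott

/-- A square integer matrix indexed by `Fin n` (rows, columns).  We think of it as the
matrix `A = (a_{ij})` defining a Bott tower; strict lower triangularity is the
predicate `SLT` below. -/
abbrev Mat (n : ℕ) := Fin n → Fin n → ℤ

/-- `a` is strictly lower triangular: `a i j = 0` unless `j < i`. -/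
def SLT {n : ℕ} (a : Mat n) : Prop := ∀ i j : Fin n, a i j ≠ 0 → (j : ℕ) < (i : ℕ)

section Defs

variable (n : ℕ)

/-- The linear form `α_i = ∑_{j<i} a_{ij} x_j` (the terms with `j ≥ i` vanish for a
strictly lower triangular matrix). -/
noncomputable def alpha (a : Mat n) (i : Fin n) : MvPolynomial (Fin n) ℤ :=
  ∑ j, C (a i j) * X j

/-- The ideal `(x_i² − α_i x_i : 1 ≤ i ≤ n)`. -/
noncomputable def bottIdeal (a : Mat n) : Ideal (MvPolynomial (Fin n) ℤ) :=
  Ideal.span (Set.range fun i : Fin n => X i ^ 2 - alpha n a i * X i)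

/-- The Bott ring `R_A = ℤ[x_1,…,x_n]/(x_i² − α_i x_i)`. -/
abbrev BRing (a : Mat n) := MvPolynomial (Fin n) ℤ ⧸ bottIdeal n a

/-- Quotient projection onto the Bott ring. -/
noncomputable def bmk (a : Mat n) : MvPolynomial (Fin n) ℤ →+* BRing n a :=
  Ideal.Quotient.mk _

/-- The class `x_i` in the Bott ring (0-based: `bx a i` is the paper's `x_{i+1}`). -/
noncomputable def bx (a : Mat n) (i : Fin n) : BRing n a := bmk n a (X i)

/-- The class of `α_i` in the Bott ring. -/
noncomputable def bal (a : Mat n) (i : Fin n) : BRing n a := bmk n a (alpha n a i)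

/-- `F_k(A)`: the span of the first `k` degree-2 generators (paper's `x_1, …, x_k`,
0-based indices `< k`). -/
noncomputable def F (a : Mat n) (k : ℕ) : Submodule ℤ (BRing n a) :=
  Submodule.span ℤ (bx n a '' {i : Fin n | (i : ℕ) < k})

/-- `H²(A)`: the span of all the degree-2 generators. -/
noncomputable def H2 (a : Mat n) : Submodule ℤ (BRing n a) :=
  Submodule.span ℤ (Set.range (bx n a))

/-- `ht(η) = min {k | η ∈ F_k(A)}`. -/
noncomputable def ht (a : Mat n) (η : BRing n a) : ℕ := sInf {k | η ∈ F n a k}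

/-- A ring isomorphism between Bott rings is graded iff it preserves the degree-2
components in both directions (both rings are generated in degree 2, so this is
equivalent to preserving the whole grading). -/
def IsGraded (a b : Mat n) (φ : BRing n a ≃+* BRing n b) : Prop :=
  (∀ z ∈ H2 n a, φ z ∈ H2 n b) ∧ (∀ z ∈ H2 n b, φ.symm z ∈ H2 n a)

/-- `φ` is `k`-stable: `φ(F_k(A)) ⊆ F_k(B)`. -/
def IsStable (a b : Mat n) (k : ℕ) (φ : BRing n a ≃+* BRing n b) : Prop :=
  ∀ z ∈ F n a k, φ z ∈ F n b k

/-! ### Rationalizations -/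

/-- The linear form `α_i` with rational coefficients. -/
noncomputable def alphaQ (a : Mat n) (i : Fin n) : MvPolynomial (Fin n) ℚ :=
  ∑ j, C ((a i j : ℚ)) * X j

noncomputable def bottIdealQ (a : Mat n) : Ideal (MvPolynomial (Fin n) ℚ) :=
  Ideal.span (Set.range fun i : Fin n => X i ^ 2 - alphaQ n a i * X i)

/-- The rationalized Bott ring `R_A ⊗ ℚ`. -/
abbrev BRingQ (a : Mat n) := MvPolynomial (Fin n) ℚ ⧸ bottIdealQ n a

noncomputable def bmkQ (a : Mat n) : MvPolynomial (Fin n) ℚ →+* BRingQ n a :=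
  Ideal.Quotient.mk _

noncomputable def bxQ (a : Mat n) (i : Fin n) : BRingQ n a := bmkQ n a (X i)

noncomputable def balQ (a : Mat n) (i : Fin n) : BRingQ n a := bmkQ n a (alphaQ n a i)

/-- `F_k(A) ⊗ ℚ` inside `R_A ⊗ ℚ`. -/
noncomputable def FQ (a : Mat n) (k : ℕ) : Submodule ℚ (BRingQ n a) :=
  Submodule.span ℚ (bxQ n a '' {i : Fin n | (i : ℕ) < k})

/-- The canonical map `R_A → R_A ⊗ ℚ`. -/
noncomputable def toQ (a : Mat n) : BRing n a →+* BRingQ n a :=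
  Ideal.Quotient.lift (bottIdeal n a)
    ((bmkQ n a).comp (MvPolynomial.map (Int.castRingHom ℚ)))
    (by
      intro p hp
      have hmap : ∀ i : Fin n,
          MvPolynomial.map (Int.castRingHom ℚ) (alpha n a i) = alphaQ n a i := by
        intro i
        simp [alpha, alphaQ, map_sum]
      have h : bottIdeal n a ≤
          Ideal.comap (MvPolynomial.map (Int.castRingHom ℚ)) (bottIdealQ n a) := by
        rw [bottIdeal, Ideal.span_le]
        rintro _ ⟨i, rfl⟩
        simp only [SetLike.mem_coe, Ideal.mem_comap, map_sub, map_mul, map_pow,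
          MvPolynomial.map_X, hmap]
        exact Ideal.subset_span ⟨i, rfl⟩
      rw [RingHom.comp_apply]
      exact Ideal.Quotient.eq_zero_iff_mem.mpr (h hp))

/-- The truncated linear form `β̄_ℓ` (rational version): for a 0-based row index `li`,
this is `∑_{k ≤ j < li} b_{li,j} y_j`, i.e. the paper's `β_ℓ` with its terms in
`F_k(B)` removed. -/
noncomputable def bbarQ (b : Mat n) (k : ℕ) (li : Fin n) : BRingQ n b :=
  ∑ j ∈ Finset.univ.filter (fun j : Fin n => k ≤ (j : ℕ) ∧ j < li),
    (b li j : ℚ) • bxQ n b j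

/-- Half of the truncated linear form `β̄_ℓ / 2` (meaningful when all relevant entries
are even), as an element of the integral Bott ring. -/
noncomputable def bbarHalf (b : Mat n) (k : ℕ) (li : Fin n) : BRing n b :=
  ∑ j ∈ Finset.univ.filter (fun j : Fin n => k ≤ (j : ℕ) ∧ j < li),
    (b li j / 2) • bx n b j

/-! ### Switching and twisting -/

/-- The matrix obtained from `b` by exchanging the rows and columns `p` and `q`. -/
def swapMat (b : Mat n) (p q : Fin n) : Mat n :=
  fun i j => b (Equiv.swap p q i) (Equiv.swap p q j)

/-- `g : R_C → R_{C'}` is a switching isomorphism: for some `j` (0-based `J`) with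
`c_{j+1,j} = 0`, `C'` is obtained from `C` by exchanging the `j`-th and `(j+1)`-st rows
and columns, and `g` swaps the `j`-th and `(j+1)`-st generators and fixes the others. -/
def IsSwitch (c c' : Mat n) (g : BRing n c ≃+* BRing n c') : Prop :=
  IsGraded n c c' g ∧
  ∃ (J : ℕ) (hJ : J + 1 < n),
    c ⟨J + 1, hJ⟩ ⟨J, by omega⟩ = 0 ∧
    c' = swapMat n c ⟨J, by omega⟩ ⟨J + 1, hJ⟩ ∧
    ∀ i, g (bx n c i) = bx n c' (Equiv.swap (⟨J, by omega⟩ : Fin n) ⟨J + 1, hJ⟩ i)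

/-- `g : R_C → R_{C'}` is a twisting isomorphism: for some `j` (0-based `J`) and
`v ∈ F_{j−1}(C)` with `v(γ_j − v) = 0`, the rows of `C'` before `j` agree with those of
`C`, `γ'_j = γ_j − 2v`, and `g` is a graded isomorphism fixing the first `j−1`
generators. -/
def IsTwist (c c' : Mat n) (g : BRing n c ≃+* BRing n c') : Prop :=
  IsGraded n c c' g ∧
  ∃ (J : ℕ) (hJ : J < n) (v : BRing n c),
    v ∈ F n c J ∧ v * (bal n c ⟨J, hJ⟩ - v) = 0 ∧
    (∀ i : Fin n, (i : ℕ) < J → ∀ m, c' i m = c i m) ∧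
    ((∑ m, c' ⟨J, hJ⟩ m • bx n c m) = bal n c ⟨J, hJ⟩ - 2 • v) ∧
    (∀ i : Fin n, (i : ℕ) < J → g (bx n c i) = bx n c' i)

/-- `IsMoveComp n c c' g` : `g : R_C → R_{C'}` is a finite (possibly empty) composition
of switching and twisting isomorphisms. -/
inductive IsMoveComp : ∀ c c' : Mat n, (BRing n c ≃+* BRing n c') → Prop
  | refl (c : Mat n) : IsMoveComp c c (RingEquiv.refl _)
  | switch {c c' c'' : Mat n} {g : BRing n c ≃+* BRing n c'}
      {g' : BRing n c' ≃+* BRing n c''} :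
      IsMoveComp c c' g → IsSwitch n c' c'' g' → IsMoveComp c c'' (g.trans g')
  | twist {c c' c'' : Mat n} {g : BRing n c ≃+* BRing n c'}
      {g' : BRing n c' ≃+* BRing n c''} :
      IsMoveComp c c' g → IsTwist n c' c'' g' → IsMoveComp c c'' (g.trans g')

end Defs

/-! ### Block matrices for ℚ-trivial Bott manifolds -/

/-- Starting (0-based) index of the `s`-th block for the partition `lam`. -/
def blockStart (t : ℕ) (lam : Fin t → ℕ) (s : Fin t) : ℕ :=
  ∑ s' ∈ Finset.univ.filter (fun s' : Fin t => s' < s), lam s'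

/-- The block-diagonal matrix with diagonal blocks `H_{λ_1}, …, H_{λ_t}`, where `H_j`
is the `j × j` strictly lower triangular matrix whose first column below the diagonal
consists of `1`s and whose other entries vanish. -/
def blockMat (n t : ℕ) (lam : Fin t → ℕ) : Mat n := fun i j =>
  if ∃ s : Fin t, (j : ℕ) = blockStart t lam s ∧ blockStart t lam s < (i : ℕ) ∧
      (i : ℕ) < blockStart t lam s + lam s then 1 else 0

/-- `H²(ℋ_{λ_s})`: the subgroup of the degree-2 component spanned by the generators
belonging to the `s`-th block. -/
noncomputable def blockH2 (n t : ℕ) (lam : Fin t → ℕ) (s : Fin t) :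
    Submodule ℤ (BRing n (blockMat n t lam)) :=
  Submodule.span ℤ (bx n (blockMat n t lam) ''
    {i : Fin n | blockStart t lam s ≤ (i : ℕ) ∧ (i : ℕ) < blockStart t lam s + lam s})

end Bott

/-!
Write `η_i = ∑_{j<i} c_{ij} x_j`. The hypothesis says that the quadratic form
`Q = ∑_{j<i} c_{ij} x_j x_i` lies in the ideal of relations `x_i² − α_i x_i`. These are
quadratic forms, so the degree-2 part of the ideal is their `ℤ`-span. Evaluating at a unit
vector `e_p` kills `Q` (it has no square terms) and every relation but the `p`-th, which takes
the value `1` (`α_p` has no `x_p`-term); so all the coefficients vanish and `Q = 0` as a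
polynomial. Evaluating `Q` at `e_p + e_q` then gives `c_{pq} = 0`.
-/

namespace MvPolynomial

variable {σ R : Type*} [CommSemiring R]

theorem homogeneousComponent_mul_of_isHomogeneous {d : ℕ} {r : MvPolynomial σ R}
    (hr : r.IsHomogeneous d) (g : MvPolynomial σ R) :
    homogeneousComponent d (g * r) = C (coeff 0 g) * r := by
  conv_lhs => rw [← sum_homogeneousComponent g, Finset.sum_mul, map_sum]
  rw [Finset.sum_eq_single 0]
  · rw [homogeneousComponent_zero, homogeneousComponent_C_mul, homogeneousComponent_eq_self hr]
  · intro k _ hk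
    rw [homogeneousComponent_of_mem ((homogeneousComponent_isHomogeneous k g).mul hr),
      if_neg (by omega)]
  · simp

theorem homogeneousComponent_eq_sum_of_mem_span {ι : Type*} [Fintype ι] {d : ℕ}
    {r : ι → MvPolynomial σ R} (hr : ∀ i, (r i).IsHomogeneous d) {P : MvPolynomial σ R}
    (hP : P ∈ Ideal.span (Set.range r)) :
    ∃ c : ι → R, homogeneousComponent d P = ∑ i, C (c i) * r i := by
  obtain ⟨g, rfl⟩ := Ideal.mem_span_range_iff_exists_fun.mp hP
  exact ⟨fun i => coeff 0 (g i), by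
    simp only [map_sum, homogeneousComponent_mul_of_isHomogeneous (hr _)]⟩

end MvPolynomial

namespace Bott

section

variable {n : ℕ}

theorem SLT.apply_eq_zero_of_le {a : Mat n} (ha : SLT a) {i j : Fin n} (hij : i ≤ j) :
    a i j = 0 := by
  by_contra h
  exact absurd (ha i j h) (by simpa using hij)

theorem isHomogeneous_alpha (a : Mat n) (i : Fin n) : (alpha n a i).IsHomogeneous 1 :=
  IsHomogeneous.sum _ _ _ fun j _ => by
    simpa using (isHomogeneous_C _ (a i j)).mul (isHomogeneous_X ℤ j)

theorem isHomogeneous_alpha_mul_X (a : Mat n) (i : Fin n) :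
    (alpha n a i * X i).IsHomogeneous 2 :=
  (isHomogeneous_alpha a i).mul (isHomogeneous_X ℤ i)

theorem isHomogeneous_bottRel (a : Mat n) (i : Fin n) :
    (X i ^ 2 - alpha n a i * X i).IsHomogeneous 2 :=
  ((isHomogeneous_X ℤ i).pow 2).sub (isHomogeneous_alpha_mul_X a i)

theorem eval_alpha (a : Mat n) (i : Fin n) (v : Fin n → ℤ) :
    eval v (alpha n a i) = ∑ j, a i j * v j := by
  simp [alpha]

theorem bmk_alpha (a c : Mat n) (i : Fin n) :
    bmk n a (alpha n c i) = ∑ j, c i j • bx n a j := by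
  simp only [alpha, map_sum, ← smul_eq_C_mul, map_zsmul, bx]

theorem exists_coeffs_of_mem_F {a : Mat n} {k : ℕ} {η : BRing n a} (hη : η ∈ F n a k) :
    ∃ v : Fin n → ℤ, (∀ j, v j ≠ 0 → (j : ℕ) < k) ∧ η = ∑ j, v j • bx n a j := by
  obtain ⟨l, hl, rfl⟩ := Finsupp.mem_span_image_iff_linearCombination ℤ |>.mp hη
  refine ⟨l, fun j hj => by_contra fun hjk => hj ((Finsupp.mem_supported' ℤ l).mp hl j hjk), ?_⟩
  rw [Finsupp.linearCombination_apply, Finsupp.sum_fintype _ _ (by simp)]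

theorem eval_single_sum_alpha_mul_X (c : Mat n) (p : Fin n) :
    eval (Pi.single p 1) (∑ i, alpha n c i * X i) = c p p := by
  simp [eval_alpha, Pi.single_apply]

theorem eval_pair_sum_alpha_mul_X (c : Mat n) (p q : Fin n) :
    eval (Pi.single p 1 + Pi.single q 1) (∑ i, alpha n c i * X i) =
      c p p + c p q + (c q p + c q q) := by
  simp [eval_alpha, Pi.single_apply, mul_add, Finset.sum_add_distrib]

theorem eval_single_bottRel {a : Mat n} (ha : SLT a) (i p : Fin n) :
    eval (Pi.single p 1) (X i ^ 2 - alpha n a i * X i) = if i = p then 1 else 0 := by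
  by_cases hip : i = p
  · subst hip
    simp [eval_alpha, Pi.single_apply, ha.apply_eq_zero_of_le le_rfl]
  · simp [eval_alpha, Pi.single_apply, hip]

theorem SLT.eq_zero_of_sum_alpha_mul_X_eq_zero {c : Mat n} (hc : SLT c)
    (h : ∑ i, alpha n c i * X i = 0) : c = 0 := by
  ext p q
  rcases lt_trichotomy q p with hqp | rfl | hpq
  · have := eval_pair_sum_alpha_mul_X c p q
    rw [h, map_zero, hc.apply_eq_zero_of_le le_rfl, hc.apply_eq_zero_of_le le_rfl,
      hc.apply_eq_zero_of_le hqp.le] at this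
    simpa using this.symm
  · exact hc.apply_eq_zero_of_le le_rfl
  · exact hc.apply_eq_zero_of_le hpq.le

theorem sum_alpha_mul_X_eq_zero_of_mem_bottIdeal {a c : Mat n} (ha : SLT a) (hc : SLT c)
    (hmem : ∑ i, alpha n c i * X i ∈ bottIdeal n a) : ∑ i, alpha n c i * X i = 0 := by
  have hhom : (∑ i, alpha n c i * X i).IsHomogeneous 2 :=
    IsHomogeneous.sum _ _ _ fun i _ => isHomogeneous_alpha_mul_X c i
  obtain ⟨coef, hcoef⟩ :=
    homogeneousComponent_eq_sum_of_mem_span (isHomogeneous_bottRel a) hmem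
  rw [homogeneousComponent_eq_self hhom] at hcoef
  have hcoef0 : ∀ p, coef p = 0 := fun p => by
    have := eval_single_sum_alpha_mul_X c p
    simpa [hcoef, eval_single_bottRel ha, hc.apply_eq_zero_of_le le_rfl] using this
  simp [hcoef, hcoef0]

end

theorem stmt_1_general (n : ℕ) (a : Mat n) (ha : SLT a)
    (η : Fin n → BRing n a) (hη : ∀ i : Fin n, η i ∈ F n a i)
    (h : ∑ i, η i * bx n a i = 0) :
    ∀ i, η i = 0 := by
  choose c hc hηc using fun i => exists_coeffs_of_mem_F (hη i)
  have hmem : ∑ i, alpha n c i * X i ∈ bottIdeal n a := by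
    rw [← Ideal.Quotient.eq_zero_iff_mem]
    change bmk n a _ = 0
    simp only [map_sum, map_mul, bmk_alpha, ← hηc]
    exact h
  have hc0 : c = 0 := SLT.eq_zero_of_sum_alpha_mul_X_eq_zero hc
    (sum_alpha_mul_X_eq_zero_of_mem_bottIdeal ha hc hmem)
  intro i
  simp [hηc i, hc0]

/-- If `η_1, …, η_n ∈ H²(A)` with `ht(η_i) < i` (i.e. with 0-based
indexing, `η i ∈ F_i(A)`), and `∑ η_i x_i = 0` in `R_A`, then all `η_i = 0`. -/
theorem stmt_1 (n : ℕ) (hn : 1 ≤ n) (a : Mat n) (ha : SLT a)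
    (η : Fin n → BRing n a) (hη : ∀ i : Fin n, η i ∈ F n a i)
    (h : ∑ i, η i * bx n a i = 0) :
    ∀ i, η i = 0 :=
  stmt_1_general n a ha η hη h

end Bott
end

section
/- Suppose α_i² = 0 in the Bott ring R_A, α_i ≠ 0, and let j := ht(α_i) (so a_{ij} ≠ 0 and a_{ij'} = 0 for j < j' < i). Then α_j² = 0 in R_A and 2α_i = a_{ij}(2x_j − α_j) in H²(A); moreover, if a_{ij} is odd, then every coefficient a_{jm} (1 ≤ m < j) of α_j is even. -/
open MvPolynomial

namespace Bott


/-- The test ring `ℤ[e₁,e₂]/(e₁², e₂² - L·e₁e₂, cubics)`, represented by coordinates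
in the basis `1, e₁, e₂, e₁e₂`. -/
@[ext] structure Q4 (L : ℤ) : Type where
  a : ℤ
  b : ℤ
  c : ℤ
  d : ℤ

namespace Q4

variable {L : ℤ}

instance : Zero (Q4 L) := ⟨⟨0,0,0,0⟩⟩
instance : One (Q4 L) := ⟨⟨1,0,0,0⟩⟩
instance : Add (Q4 L) := ⟨fun x y => ⟨x.a+y.a, x.b+y.b, x.c+y.c, x.d+y.d⟩⟩
instance : Neg (Q4 L) := ⟨fun x => ⟨-x.a, -x.b, -x.c, -x.d⟩⟩
instance : Mul (Q4 L) :=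
  ⟨fun x y => ⟨x.a*y.a, x.a*y.b+x.b*y.a, x.a*y.c+x.c*y.a,
    x.a*y.d+x.d*y.a+x.b*y.c+x.c*y.b+L*(x.c*y.c)⟩⟩

@[simp] lemma zero_a : (0 : Q4 L).a = 0 := rfl
@[simp] lemma zero_b : (0 : Q4 L).b = 0 := rfl
@[simp] lemma zero_c : (0 : Q4 L).c = 0 := rfl
@[simp] lemma zero_d : (0 : Q4 L).d = 0 := rfl
@[simp] lemma one_a : (1 : Q4 L).a = 1 := rfl
@[simp] lemma one_b : (1 : Q4 L).b = 0 := rfl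
@[simp] lemma one_c : (1 : Q4 L).c = 0 := rfl
@[simp] lemma one_d : (1 : Q4 L).d = 0 := rfl
@[simp] lemma add_a (x y : Q4 L) : (x+y).a = x.a+y.a := rfl
@[simp] lemma add_b (x y : Q4 L) : (x+y).b = x.b+y.b := rfl
@[simp] lemma add_c (x y : Q4 L) : (x+y).c = x.c+y.c := rfl
@[simp] lemma add_d (x y : Q4 L) : (x+y).d = x.d+y.d := rfl
@[simp] lemma neg_a (x : Q4 L) : (-x).a = -x.a := rfl
@[simp] lemma neg_b (x : Q4 L) : (-x).b = -x.b := rfl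
@[simp] lemma neg_c (x : Q4 L) : (-x).c = -x.c := rfl
@[simp] lemma neg_d (x : Q4 L) : (-x).d = -x.d := rfl
@[simp] lemma mul_a (x y : Q4 L) : (x*y).a = x.a*y.a := rfl
@[simp] lemma mul_b (x y : Q4 L) : (x*y).b = x.a*y.b+x.b*y.a := rfl
@[simp] lemma mul_c (x y : Q4 L) : (x*y).c = x.a*y.c+x.c*y.a := rfl
@[simp] lemma mul_d (x y : Q4 L) :
    (x*y).d = x.a*y.d+x.d*y.a+x.b*y.c+x.c*y.b+L*(x.c*y.c) := rfl


instance : SMul ℕ (Q4 L) := ⟨fun m x => ⟨m*x.a, m*x.b, m*x.c, m*x.d⟩⟩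
instance : SMul ℤ (Q4 L) := ⟨fun z x => ⟨z*x.a, z*x.b, z*x.c, z*x.d⟩⟩
instance : NatCast (Q4 L) := ⟨fun m => ⟨m, 0, 0, 0⟩⟩
instance : IntCast (Q4 L) := ⟨fun z => ⟨z, 0, 0, 0⟩⟩

@[simp] lemma nsmul_a (m : ℕ) (x : Q4 L) : (m • x).a = m*x.a := rfl
@[simp] lemma nsmul_b (m : ℕ) (x : Q4 L) : (m • x).b = m*x.b := rfl
@[simp] lemma nsmul_c (m : ℕ) (x : Q4 L) : (m • x).c = m*x.c := rfl
@[simp] lemma nsmul_d (m : ℕ) (x : Q4 L) : (m • x).d = m*x.d := rfl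
@[simp] lemma zsmul_a (z : ℤ) (x : Q4 L) : (z • x).a = z*x.a := rfl
@[simp] lemma zsmul_b (z : ℤ) (x : Q4 L) : (z • x).b = z*x.b := rfl
@[simp] lemma zsmul_c (z : ℤ) (x : Q4 L) : (z • x).c = z*x.c := rfl
@[simp] lemma zsmul_d (z : ℤ) (x : Q4 L) : (z • x).d = z*x.d := rfl
@[simp] lemma natCast_a (m : ℕ) : ((m : ℕ) : Q4 L).a = m := rfl
@[simp] lemma natCast_b (m : ℕ) : ((m : ℕ) : Q4 L).b = 0 := rfl
@[simp] lemma natCast_c (m : ℕ) : ((m : ℕ) : Q4 L).c = 0 := rfl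
@[simp] lemma natCast_d (m : ℕ) : ((m : ℕ) : Q4 L).d = 0 := rfl
@[simp] lemma intCast_a (z : ℤ) : ((z : ℤ) : Q4 L).a = z := rfl
@[simp] lemma intCast_b (z : ℤ) : ((z : ℤ) : Q4 L).b = 0 := rfl
@[simp] lemma intCast_c (z : ℤ) : ((z : ℤ) : Q4 L).c = 0 := rfl
@[simp] lemma intCast_d (z : ℤ) : ((z : ℤ) : Q4 L).d = 0 := rfl

instance instAG : AddCommGroup (Q4 L) where
  add := (· + ·)
  add_assoc x y z := by ext <;> simp <;> push_cast <;> ring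
  zero := 0
  zero_add x := by ext <;> simp <;> push_cast <;> ring
  add_zero x := by ext <;> simp <;> push_cast <;> ring
  add_comm x y := by ext <;> simp <;> push_cast <;> ring
  neg := Neg.neg
  neg_add_cancel x := by ext <;> simp <;> push_cast <;> ring
  nsmul := (· • ·)
  nsmul_zero x := by ext <;> simp <;> push_cast <;> ring
  nsmul_succ m x := by ext <;> simp <;> push_cast <;> ring
  zsmul := (· • ·)
  zsmul_zero' x := by ext <;> simp <;> push_cast <;> ring
  zsmul_succ' m x := by ext <;> simp <;> push_cast <;> ring
  zsmul_neg' m x := by ext <;> simp [Int.negSucc_eq] <;> push_cast <;> ring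

instance : CommRing (Q4 L) where
  __ := (instAG : AddCommGroup (Q4 L))
  mul := (· * ·)
  mul_assoc x y z := by ext <;> simp <;> push_cast <;> ring
  one := 1
  one_mul x := by ext <;> simp <;> push_cast <;> ring
  mul_one x := by ext <;> simp <;> push_cast <;> ring
  left_distrib x y z := by ext <;> simp <;> push_cast <;> ring
  right_distrib x y z := by ext <;> simp <;> push_cast <;> ring
  zero_mul x := by ext <;> simp <;> push_cast <;> ring
  mul_zero x := by ext <;> simp <;> push_cast <;> ring
  mul_comm x y := by ext <;> simp <;> push_cast <;> ring
  natCast := Nat.cast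
  natCast_zero := by ext <;> simp <;> push_cast <;> ring
  natCast_succ m := by ext <;> simp <;> push_cast <;> ring
  intCast := Int.cast
  intCast_ofNat m := by ext <;> simp <;> push_cast <;> ring
  intCast_negSucc m := by ext <;> simp [Int.negSucc_eq] <;> push_cast <;> ring

@[simp] lemma sub_a (x y : Q4 L) : (x-y).a = x.a - y.a := by
  simp [sub_eq_add_neg]
@[simp] lemma sub_b (x y : Q4 L) : (x-y).b = x.b - y.b := by
  simp [sub_eq_add_neg]
@[simp] lemma sub_c (x y : Q4 L) : (x-y).c = x.c - y.c := by
  simp [sub_eq_add_neg]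
@[simp] lemma sub_d (x y : Q4 L) : (x-y).d = x.d - y.d := by
  simp [sub_eq_add_neg]

@[simp] lemma sum_a {ι : Type*} (s : Finset ι) (f : ι → Q4 L) :
    (∑ x ∈ s, f x).a = ∑ x ∈ s, (f x).a :=
  map_sum (AddMonoidHom.mk' Q4.a fun _ _ => rfl) f s
@[simp] lemma sum_b {ι : Type*} (s : Finset ι) (f : ι → Q4 L) :
    (∑ x ∈ s, f x).b = ∑ x ∈ s, (f x).b :=
  map_sum (AddMonoidHom.mk' Q4.b fun _ _ => rfl) f s
@[simp] lemma sum_c {ι : Type*} (s : Finset ι) (f : ι → Q4 L) :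
    (∑ x ∈ s, f x).c = ∑ x ∈ s, (f x).c :=
  map_sum (AddMonoidHom.mk' Q4.c fun _ _ => rfl) f s
@[simp] lemma sum_d {ι : Type*} (s : Finset ι) (f : ι → Q4 L) :
    (∑ x ∈ s, f x).d = ∑ x ∈ s, (f x).d :=
  map_sum (AddMonoidHom.mk' Q4.d fun _ _ => rfl) f s

end Q4


section Eval

variable {n : ℕ} {a : Mat n}

lemma slt_zero (ha : SLT a) {p q : Fin n} (h : (p : ℕ) ≤ (q : ℕ)) : a p q = 0 := by
  by_contra hne
  exact absurd (ha p q hne) (by omega)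

/-- The evaluation point used for the pair `(k,l)`: `x_k ↦ e₁`, `x_l ↦ e₂`,
other variables to `0` (when `k = l`, `x_k ↦ e₁`). -/
noncomputable def phiPt (a : Mat n) (k l : Fin n) : Fin n → Q4 (a l k) :=
  fun m => if m = k then ⟨0,1,0,0⟩ else if m = l then ⟨0,0,1,0⟩ else 0

/-- Evaluation homomorphism at the point `phiPt`. -/
noncomputable def phiP (a : Mat n) (k l : Fin n) :
    MvPolynomial (Fin n) ℤ →+* Q4 (a l k) :=
  eval₂Hom (Int.castRingHom (Q4 (a l k))) (phiPt a k l)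

@[simp] lemma phiPt_a (k l m : Fin n) : (phiPt a k l m).a = 0 := by
  unfold phiPt; split_ifs <;> rfl

@[simp] lemma phiPt_b (k l m : Fin n) : (phiPt a k l m).b = if m = k then 1 else 0 := by
  unfold phiPt; split_ifs <;> rfl

@[simp] lemma phiPt_c (k l m : Fin n) (hkl : k ≠ l) :
    (phiPt a k l m).c = if m = l then 1 else 0 := by
  unfold phiPt
  split_ifs with h1 h2 h2 <;> first | rfl | (exfalso; exact hkl (h1 ▸ h2.symm ▸ rfl))

@[simp] lemma phiPt_d (k l m : Fin n) : (phiPt a k l m).d = 0 := by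
  unfold phiPt; split_ifs <;> rfl

lemma phiP_lin (k l : Fin n) (hkl : k ≠ l) (d : Fin n → ℤ) :
    phiP a k l (∑ m, C (d m) * X m) = ⟨0, d k, d l, 0⟩ := by
  rw [map_sum]
  have hterm : ∀ m : Fin n, phiP a k l (C (d m) * X m)
      = ((d m : ℤ) : Q4 (a l k)) * phiPt a k l m := by
    intro m
    rw [map_mul]
    simp [phiP]
  rw [Finset.sum_congr rfl fun m _ => hterm m]
  ext
  · simp
  · simp only [Q4.sum_b, Q4.mul_b, Q4.intCast_a, Q4.intCast_b, phiPt_b, phiPt_a]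
    simp [mul_ite]
  · simp only [Q4.sum_c, Q4.mul_c, Q4.intCast_a, Q4.intCast_c, phiPt_c k l _ hkl, phiPt_a]
    simp [mul_ite]
  · simp

lemma phiP_lin_diag (k : Fin n) (d : Fin n → ℤ) :
    phiP a k k (∑ m, C (d m) * X m) = ⟨0, d k, 0, 0⟩ := by
  rw [map_sum]
  have hterm : ∀ m : Fin n, phiP a k k (C (d m) * X m)
      = ((d m : ℤ) : Q4 (a k k)) * phiPt a k k m := by
    intro m
    rw [map_mul]
    simp [phiP]
  rw [Finset.sum_congr rfl fun m _ => hterm m]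
  have hc : ∀ m : Fin n, (phiPt a k k m).c = 0 := by
    intro m; unfold phiPt; split_ifs <;> rfl
  ext
  · simp
  · simp only [Q4.sum_b, Q4.mul_b, Q4.intCast_a, Q4.intCast_b, phiPt_b, phiPt_a]
    simp [mul_ite]
  · simp [hc]
  · simp [hc]

lemma phiP_vanish (ha : SLT a) (k l : Fin n) (hkl : k < l) (m : Fin n) :
    phiP a k l (X m ^ 2 - alpha n a m * X m) = 0 := by
  have hXm : phiP a k l (X m) = phiPt a k l m := by simp [phiP]
  have hal : phiP a k l (alpha n a m) = ⟨0, a m k, a m l, 0⟩ :=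
    phiP_lin k l (ne_of_lt hkl) (a m)
  have hkl' : (k : ℕ) < (l : ℕ) := hkl
  rw [map_sub, map_pow, map_mul, hXm, hal]
  rcases eq_or_ne m k with rfl | hmk
  · have h1 : a m l = 0 := slt_zero ha hkl'.le
    have h2 : a m m = 0 := slt_zero ha le_rfl
    unfold phiPt
    rw [if_pos rfl]
    ext <;> simp [pow_two, h1, h2]
  · rcases eq_or_ne m l with rfl | hml
    · have h3 : a m m = 0 := slt_zero ha le_rfl
      unfold phiPt
      rw [if_neg hmk, if_pos rfl]
      ext <;> simp [pow_two, h3]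
    · unfold phiPt
      rw [if_neg hmk, if_neg hml]
      ext <;> simp [pow_two]

lemma phiP_vanish_diag (k m : Fin n) :
    phiP a k k (X m ^ 2 - alpha n a m * X m) = 0 := by
  have hXm : phiP a k k (X m) = phiPt a k k m := by simp [phiP]
  have hal : phiP a k k (alpha n a m) = ⟨0, a m k, 0, 0⟩ := phiP_lin_diag k (a m)
  rw [map_sub, map_pow, map_mul, hXm, hal]
  rcases eq_or_ne m k with rfl | hmk
  · unfold phiPt
    rw [if_pos rfl]
    ext <;> simp [pow_two]
  · unfold phiPt
    rw [if_neg hmk, if_neg hmk]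
    ext <;> simp [pow_two]

lemma phiP_ideal (ha : SLT a) (k l : Fin n) (hkl : k ≤ l) :
    ∀ p ∈ bottIdeal n a, phiP a k l p = 0 := by
  intro p hp
  have hle : bottIdeal n a ≤ RingHom.ker (phiP a k l) := by
    rw [bottIdeal, Ideal.span_le]
    rintro _ ⟨m, rfl⟩
    rcases eq_or_lt_of_le hkl with rfl | h
    · exact phiP_vanish_diag k m
    · exact phiP_vanish ha k l h m
  exact hle hp

/-- The fundamental quadratic relation extracted from `α_i² = 0`. -/
lemma pair_rel (ha : SLT a) (i k l : Fin n) (hkl : k < l)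
    (hsq : bal n a i ^ 2 = 0) :
    2 * (a i k * a i l) + a l k * (a i l * a i l) = 0 := by
  have hmem : alpha n a i ^ 2 ∈ bottIdeal n a := by
    rw [← Ideal.Quotient.eq_zero_iff_mem]
    calc Ideal.Quotient.mk (bottIdeal n a) (alpha n a i ^ 2)
        = bal n a i ^ 2 := by rw [map_pow]; rfl
      _ = 0 := hsq
  have h0 : phiP a k l (alpha n a i ^ 2) = 0 := phiP_ideal ha k l hkl.le _ hmem
  rw [map_pow, show alpha n a i = ∑ m, C (a i m) * X m from rfl,
    phiP_lin k l (ne_of_lt hkl) (a i)] at h0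
  have := congrArg Q4.d h0
  simp [pow_two] at this
  linarith

lemma phiP_ideal_diag (k : Fin n) : ∀ p ∈ bottIdeal n a, phiP a k k p = 0 := by
  intro p hp
  have hle : bottIdeal n a ≤ RingHom.ker (phiP a k k) := by
    rw [bottIdeal, Ideal.span_le]
    rintro _ ⟨m, rfl⟩
    exact phiP_vanish_diag k m
  exact hle hp

/-- The single-variable evaluation, descended to the Bott ring. -/
noncomputable def psiD (a : Mat n) (k : Fin n) : BRing n a →+* Q4 (a k k) :=
  Ideal.Quotient.lift (bottIdeal n a) (phiP a k k) (phiP_ideal_diag k)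

lemma psiD_mk (k : Fin n) (p : MvPolynomial (Fin n) ℤ) :
    psiD a k (bmk n a p) = phiP a k k p :=
  Ideal.Quotient.lift_mk _ _ _

/-- Coefficient extraction: a linear form in `F_K` has vanishing coefficients
beyond `K`. -/
lemma F_coeff {K : ℕ} {d : Fin n → ℤ}
    (h : bmk n a (∑ m, C (d m) * X m) ∈ F n a K) {m : Fin n} (hm : K ≤ (m : ℕ)) :
    d m = 0 := by
  have hb : ∀ z ∈ F n a K, (psiD a m z).b = 0 := by
    intro z hz
    induction hz using Submodule.span_induction with
    | mem x hx =>
        obtain ⟨p, hp, rfl⟩ := hx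
        have hpm : p ≠ m := by
          intro h0
          subst h0
          have : (p : ℕ) < K := hp
          omega
        have hx2 : psiD a m (bx n a p) = phiPt a m m p := by
          rw [bx, psiD_mk]
          simp [phiP]
        rw [hx2]
        simp [phiPt, hpm]
    | zero => simp
    | add x y hx hy ihx ihy => rw [map_add]; simp [ihx, ihy]
    | smul z x hx ih =>
        rw [zsmul_eq_mul, map_mul, map_intCast]
        simp [ih]
  have hfin := hb _ h
  rw [psiD_mk, phiP_lin_diag] at hfin
  exact hfin

/-- Membership in `F_K` for a linear form supported below `K`. -/
lemma mem_F {K : ℕ} (d : Fin n → ℤ) (hd : ∀ m : Fin n, K ≤ (m : ℕ) → d m = 0) :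
    bmk n a (∑ m, C (d m) * X m) ∈ F n a K := by
  rw [map_sum]
  refine Submodule.sum_mem _ fun m _ => ?_
  by_cases hm : (m : ℕ) < K
  · have hx : bmk n a (C (d m) * X m) = (d m) • bx n a m := by
      have h2 := eq_intCast ((bmk n a).comp MvPolynomial.C) (d m)
      rw [RingHom.comp_apply] at h2
      rw [map_mul, zsmul_eq_mul, h2]
      rfl
    rw [hx]
    exact Submodule.smul_mem _ _ (Submodule.subset_span ⟨m, hm, rfl⟩)
  · rw [hd m (le_of_not_gt hm)]
    simp

/-- Rebuilding: the row-`j` relations imply `α_j² ∈ (x_k² - α_k x_k)`. -/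
lemma rebuild (ha : SLT a) (j : Fin n)
    (hrow : ∀ k l : Fin n, 2*(a j k * a j l) - (if l = k then 2*(a j k)^2 else 0)
      + (a j l)^2 * a l k + (a j k)^2 * a k l = 0) :
    alpha n a j ^ 2 = ∑ k, C ((a j k)^2) * (X k ^ 2 - alpha n a k * X k) := by
  set N : Fin n → Fin n → ℤ := fun k l =>
    a j k * a j l - (if l = k then (a j k)^2 else 0) + (a j k)^2 * a k l with hN
  have e1 : alpha n a j ^ 2 = ∑ k, ∑ l, C (a j k * a j l) * (X k * X l) := by
    rw [pow_two, alpha, Finset.sum_mul_sum]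
    exact Finset.sum_congr rfl fun k _ => Finset.sum_congr rfl fun l _ => by
      rw [map_mul]; ring
  have e2 : ∀ k : Fin n, C ((a j k)^2) * (X k ^ 2 - alpha n a k * X k)
      = (∑ l, (if l = k then C ((a j k)^2) else 0) * (X k * X l))
        - ∑ l, C ((a j k)^2 * a k l) * (X k * X l) := by
    intro k
    have hA : (∑ l, (if l = k then C ((a j k)^2) else 0) * (X k * X l))
        = C ((a j k)^2) * (X k * X k) := by
      simp [ite_mul]
    have hB : (∑ l, C ((a j k)^2 * a k l) * (X k * X l))
        = C ((a j k)^2) * (alpha n a k * X k) := by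
      rw [alpha, Finset.sum_mul, Finset.mul_sum]
      exact Finset.sum_congr rfl fun l _ => by rw [map_mul]; ring
    rw [hA, hB]
    ring
  have key : alpha n a j ^ 2 - ∑ k, C ((a j k)^2) * (X k ^ 2 - alpha n a k * X k)
      = ∑ k, ∑ l, C (N k l) * (X k * X l) := by
    rw [e1, Finset.sum_congr rfl fun k (_ : k ∈ Finset.univ) => e2 k,
      ← Finset.sum_sub_distrib]
    refine Finset.sum_congr rfl fun k _ => ?_
    have hre : ∀ A B C' : MvPolynomial (Fin n) ℤ, A - (B - C') = (A - B) + C' :=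
      fun A B C' => by ring
    rw [hre, ← Finset.sum_sub_distrib, ← Finset.sum_add_distrib]
    refine Finset.sum_congr rfl fun l _ => ?_
    have hite : (if l = k then C ((a j k)^2) else 0 : MvPolynomial (Fin n) ℤ)
        = C (if l = k then ((a j k)^2) else 0) := by
      split_ifs <;> simp
    rw [hite, ← sub_mul, ← add_mul, ← map_sub, ← map_add, hN]
  have key2 : (∑ k, ∑ l, C (N k l) * (X k * X l))
      = ∑ k, ∑ l, C (N l k) * (X k * X l) := by
    conv_rhs => rw [Finset.sum_comm]
    exact Finset.sum_congr rfl fun k _ => Finset.sum_congr rfl fun l _ => by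
      rw [mul_comm (X k) (X l)]
  have hsum0 : (∑ k, ∑ l, C (N k l) * (X k * X l))
      + (∑ k, ∑ l, C (N l k) * (X k * X l)) = 0 := by
    rw [← Finset.sum_add_distrib]
    refine Finset.sum_eq_zero fun k _ => ?_
    rw [← Finset.sum_add_distrib]
    refine Finset.sum_eq_zero fun l _ => ?_
    rw [← add_mul, ← map_add]
    have hz : N k l + N l k = 0 := by
      have hr := hrow k l
      simp only [hN]
      by_cases h : l = k
      · subst h
        have hkk : a l l = 0 := slt_zero ha le_rfl
        simp [hkk]
        ring
      · simp only [if_neg h, if_neg (fun hh : k = l => h hh.symm)] at hr ⊢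
        linarith
    rw [hz]
    simp
  have hDzero : (∑ k, ∑ l, C (N k l) * (X k * X l)) = 0 := by
    have h2 : (2 : MvPolynomial (Fin n) ℤ) * (∑ k, ∑ l, C (N k l) * (X k * X l)) = 0 := by
      rw [two_mul]
      conv_lhs => rw [key2]
      rw [← key2] at hsum0 ⊢
      linear_combination hsum0
    rcases mul_eq_zero.mp h2 with h | h
    · exact absurd h two_ne_zero
    · exact h
  rw [← sub_eq_zero, key, hDzero]

end Eval

end Bott

namespace Bott

/-- Suppose `α_i² = 0` in `R_A`, `α_i ≠ 0`, and let `j := ht(α_i)`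
(in 0-based indexing, `(j : ℕ) + 1 = ht(α_i)`).  Then `a_{ij} ≠ 0` and `a_{ij'} = 0`
for `j < j' < i`; moreover `α_j² = 0`, `2α_i = a_{ij}(2x_j − α_j)` in `H²(A)`, and if
`a_{ij}` is odd then every coefficient `a_{jm}` (`m < j`) of `α_j` is even. -/
theorem stmt_3 (n : ℕ) (hn : 1 ≤ n) (a : Mat n) (ha : SLT a)
    (i : Fin n) (hsq : bal n a i ^ 2 = 0) (hne : bal n a i ≠ 0)
    (j : Fin n) (hj : (j : ℕ) + 1 = ht n a (bal n a i)) :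
    a i j ≠ 0 ∧ (∀ j' : Fin n, j < j' → j' < i → a i j' = 0) ∧
    bal n a j ^ 2 = 0 ∧
    2 * bal n a i = a i j • (2 * bx n a j - bal n a j) ∧
    (Odd (a i j) → ∀ m : Fin n, m < j → Even (a j m)) := by
  have hbal : bal n a i = bmk n a (∑ m, C (a i m) * X m) := rfl
  have hSne : Set.Nonempty {k | bal n a i ∈ F n a k} := by
    refine ⟨n, ?_⟩
    show bal n a i ∈ F n a n
    rw [hbal]
    exact mem_F _ (fun m hm => absurd m.isLt (by omega))
  have hmem : bal n a i ∈ F n a ((j : ℕ) + 1) := by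
    have h1 := Nat.sInf_mem hSne
    rw [show sInf {k | bal n a i ∈ F n a k} = ht n a (bal n a i) from rfl, ← hj] at h1
    exact h1
  have hvan : ∀ m : Fin n, (j : ℕ) < (m : ℕ) → a i m = 0 := by
    intro m hm
    exact F_coeff (hbal ▸ hmem) (by omega)
  have haij : a i j ≠ 0 := by
    intro h0
    have hm : bal n a i ∈ F n a (j : ℕ) := by
      rw [hbal]
      refine mem_F _ (fun m hm => ?_)
      rcases eq_or_lt_of_le hm with he | hl
      · have hmj : m = j := Fin.ext he.symm
        rw [hmj]
        exact h0
      · exact hvan m hl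
    have hle : ht n a (bal n a i) ≤ (j : ℕ) := Nat.sInf_le hm
    omega
  have hN2 : ∀ l : Fin n, l ≠ j → 2 * a i l + a i j * a j l = 0 := by
    intro l hl
    rcases lt_or_gt_of_ne hl with h | h
    · have hp := pair_rel ha i l j h hsq
      have hf : a i j * (2 * a i l + a i j * a j l) = 0 := by linear_combination hp
      exact (mul_eq_zero.mp hf).resolve_left haij
    · have h1 : a i l = 0 := hvan l h
      have h2 : a j l = 0 := slt_zero ha (le_of_lt h)
      rw [h1, h2]
      ring
  have hN3 : ∀ k l : Fin n, k < l → 2 * (a j k * a j l) + (a j l)^2 * a l k = 0 := by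
    intro k l hkl
    by_cases hlj : l = j
    · have hjj : a j j = 0 := slt_zero ha le_rfl
      rw [hlj, hjj]
      ring
    · rcases lt_or_gt_of_ne hlj with h | h
      · have hkj : k ≠ j := ne_of_lt (lt_trans hkl h)
        have h1 := hN2 k hkj
        have h2 := hN2 l (ne_of_lt h)
        have hp := pair_rel ha i k l hkl hsq
        have hkey : (a i j)^2 * (2 * (a j k * a j l) + (a j l)^2 * a l k) = 0 := by
          linear_combination (4 : ℤ) * hp + (2 * (a i j) * (a j l)) * h1
            + (a l k * (a i j) * (a j l) - 2 * (a l k) * (a i l) - 4 * (a i k)) * h2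
        exact (mul_eq_zero.mp hkey).resolve_left (pow_ne_zero 2 haij)
      · have h1 : a j l = 0 := slt_zero ha (le_of_lt h)
        rw [h1]
        ring
  have hrow : ∀ k l : Fin n, 2*(a j k * a j l) - (if l = k then 2*(a j k)^2 else 0)
      + (a j l)^2 * a l k + (a j k)^2 * a k l = 0 := by
    intro k l
    rcases lt_trichotomy k l with h | h | h
    · have h1 : a k l = 0 := slt_zero ha (le_of_lt h)
      rw [if_neg (ne_of_gt h), h1]
      linear_combination hN3 k l h
    · have h1 : a l l = 0 := slt_zero ha le_rfl
      rw [h]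
      rw [if_pos rfl, h1]
      ring
    · have h1 : a l k = 0 := slt_zero ha (le_of_lt h)
      rw [if_neg (ne_of_lt h), h1]
      linear_combination hN3 l k h
  have hc3 : bal n a j ^ 2 = 0 := by
    have hre := rebuild ha j hrow
    have hb2 : bal n a j ^ 2 = bmk n a (alpha n a j ^ 2) := by rw [map_pow]; rfl
    rw [hb2, hre, map_sum]
    refine Finset.sum_eq_zero fun k _ => ?_
    rw [map_mul]
    have h0 : bmk n a (X k ^ 2 - alpha n a k * X k) = 0 :=
      Ideal.Quotient.eq_zero_iff_mem.mpr (Ideal.subset_span ⟨k, rfl⟩)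
    rw [h0, mul_zero]
  have hjj : a j j = 0 := slt_zero ha le_rfl
  have hterm : ∀ l : Fin n, C (2 * a i l + a i j * a j l) * X l
      = (if l = j then C (2 * a i j) else 0 : MvPolynomial (Fin n) ℤ) * X l := by
    intro l
    by_cases hlj : l = j
    · rw [hlj, if_pos rfl, hjj, mul_zero, add_zero]
    · rw [if_neg hlj, hN2 l hlj, map_zero, zero_mul]
  have hsum : (∑ l, C (2 * a i l + a i j * a j l) * X l : MvPolynomial (Fin n) ℤ)
      = C (2 * a i j) * X j := by
    rw [Finset.sum_congr rfl fun l _ => hterm l]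
    simp [ite_mul, Finset.sum_ite_eq']
  have hpoly : 2 * alpha n a i = C (a i j) * (2 * X j - alpha n a j) := by
    have hl : 2 * alpha n a i = ∑ l, C (2 * a i l) * X l := by
      rw [alpha, Finset.mul_sum]
      exact Finset.sum_congr rfl fun l _ => by rw [map_mul, map_ofNat]; ring
    have hr : C (a i j) * (2 * X j - alpha n a j)
        = C (2 * a i j) * X j - ∑ l, C (a i j * a j l) * X l := by
      rw [alpha, mul_sub, Finset.mul_sum]
      congr 1
      · rw [map_mul, map_ofNat]; ring
      · exact Finset.sum_congr rfl fun l _ => by rw [map_mul]; ring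
    rw [hl, hr, ← hsum, ← Finset.sum_sub_distrib]
    refine Finset.sum_congr rfl fun l _ => ?_
    rw [← sub_mul, ← map_sub]
    congr 1
    ring
  have hc4 : 2 * bal n a i = a i j • (2 * bx n a j - bal n a j) := by
    have h5 := congrArg (bmk n a) hpoly
    rw [map_mul, map_mul, map_ofNat, map_sub, map_mul, map_ofNat] at h5
    have h2 := eq_intCast ((bmk n a).comp MvPolynomial.C) (a i j)
    rw [RingHom.comp_apply] at h2
    rw [h2] at h5
    rw [zsmul_eq_mul]
    exact h5
  refine ⟨haij, fun j' h1 _ => hvan j' h1, hc3, hc4, ?_⟩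
  intro hodd m hm
  have h := hN2 m (ne_of_lt hm)
  have heven : Even (a i j * a j m) := ⟨-(a i m), by linarith⟩
  rcases Int.even_mul.mp heven with h' | h'
  · exact absurd h' (Int.not_even_iff_odd.mpr hodd)
  · exact h'

end Bott
end

section
/- Suppose there exist 1 ≤ j ≤ n and v ∈ F_{j−1}(B) satisfying v(β_j − v) = 0 in the Bott ring R_B. Then there exists a strictly lower-triangular integer matrix B' = (b'_{ij}) of size n with β'_i = β_i for all i < j and β'_j = β_j − 2v, together with a graded ring isomorphism g : R_B → R_{B'} satisfying g(y_i) = y'_i for all i < j (i.e., g restricts to the identity on F_{j−1}). -/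
open MvPolynomial

namespace Bott

/-! ### auxiliary machinery for twisting -/

section Twist
variable {n : ℕ}

/-- Class of a linear form in the Bott ring, as a sum of scalar multiples. -/
lemma bmk_linform (a : Mat n) (d : Fin n → ℤ) :
    bmk n a (∑ m, C (d m) * X m) = ∑ m, d m • bx n a m := by
  rw [map_sum]
  refine Finset.sum_congr rfl fun m _ => ?_
  rw [map_mul, zsmul_eq_mul, eq_intCast (C : ℤ →+* MvPolynomial (Fin n) ℤ) (d m), map_intCast]
  rfl

lemma bal_eq_sum (a : Mat n) (i : Fin n) :
    bal n a i = ∑ m, a i m • bx n a m := bmk_linform a (a i)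

lemma aeval_linform (g : Fin n → MvPolynomial (Fin n) ℤ) (d : Fin n → ℤ) :
    aeval g (∑ m, C (d m) * X m) = ∑ m, C (d m) * g m := by
  simp [map_sum]

/-- Substituting into a linear form supported below `J`, by a substitution fixing
the variables below `J`, does nothing. -/
lemma aeval_linform_low (g : Fin n → MvPolynomial (Fin n) ℤ) (d : Fin n → ℤ) (J : ℕ)
    (hg : ∀ m : Fin n, (m : ℕ) < J → g m = X m) (hd : ∀ m : Fin n, ¬ ((m : ℕ) < J) → d m = 0) :
    aeval g (∑ m, C (d m) * X m) = ∑ m, C (d m) * X m := by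
  rw [aeval_linform]
  refine Finset.sum_congr rfl fun m _ => ?_
  by_cases hm : (m : ℕ) < J
  · rw [hg m hm]
  · rw [hd m hm, map_zero, zero_mul, zero_mul]

variable (b : Mat n) (J : ℕ) (hJ : J < n) (c : Fin n → ℤ)

/-- The linear form `p = ∑ c_m x_m`. -/
noncomputable def pP : MvPolynomial (Fin n) ℤ := ∑ m, C (c m) * X m

/-- twisted matrix -/
def twistMat : Mat n := fun i m =>
  if (i : ℕ) = J then b i m - 2 * c m
  else if J < (i : ℕ) then b i m + b i ⟨J, hJ⟩ * c m
  else b i m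

noncomputable def fF : Fin n → MvPolynomial (Fin n) ℤ :=
  fun i => if i = ⟨J, hJ⟩ then X i + pP c else X i
noncomputable def fF' : Fin n → MvPolynomial (Fin n) ℤ :=
  fun i => if i = ⟨J, hJ⟩ then X i - pP c else X i

variable (hc0 : ∀ m : Fin n, ¬ ((m : ℕ) < J) → c m = 0)

include hc0 in
lemma aeval_fF_p : aeval (fF J hJ c) (pP c) = pP c := by
  refine aeval_linform_low _ _ J (fun m hm => ?_) hc0
  simp only [fF]
  rw [if_neg]
  intro h
  rw [h] at hm
  simp at hm

include hc0 in
lemma aeval_fF'_p : aeval (fF' J hJ c) (pP c) = pP c := by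
  refine aeval_linform_low _ _ J (fun m hm => ?_) hc0
  simp only [fF']
  rw [if_neg]
  intro h
  rw [h] at hm
  simp at hm

include hc0 in
/-- The twisting substitution as an algebra automorphism of the polynomial ring. -/
noncomputable def twistAlg : MvPolynomial (Fin n) ℤ ≃ₐ[ℤ] MvPolynomial (Fin n) ℤ :=
  AlgEquiv.ofAlgHom (aeval (fF J hJ c)) (aeval (fF' J hJ c))
    (by
      apply MvPolynomial.algHom_ext
      intro i
      simp only [AlgHom.comp_apply, aeval_X, AlgHom.id_apply]
      by_cases hi : i = (⟨J, hJ⟩ : Fin n)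
      · subst hi
        rw [show fF' J hJ c ⟨J, hJ⟩ = X ⟨J, hJ⟩ - pP c from if_pos rfl, map_sub, aeval_X,
          show fF J hJ c ⟨J, hJ⟩ = X ⟨J, hJ⟩ + pP c from if_pos rfl, aeval_fF_p J hJ c hc0]
        ring
      · rw [show fF' J hJ c i = X i from if_neg hi, aeval_X,
          show fF J hJ c i = X i from if_neg hi])
    (by
      apply MvPolynomial.algHom_ext
      intro i
      simp only [AlgHom.comp_apply, aeval_X, AlgHom.id_apply]
      by_cases hi : i = (⟨J, hJ⟩ : Fin n)
      · subst hi
        rw [show fF J hJ c ⟨J, hJ⟩ = X ⟨J, hJ⟩ + pP c from if_pos rfl, map_add, aeval_X,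
          show fF' J hJ c ⟨J, hJ⟩ = X ⟨J, hJ⟩ - pP c from if_pos rfl, aeval_fF'_p J hJ c hc0]
        ring
      · rw [show fF J hJ c i = X i from if_neg hi, aeval_X,
          show fF' J hJ c i = X i from if_neg hi])

lemma twistAlg_apply (x) : twistAlg J hJ c hc0 x = aeval (fF J hJ c) x := rfl
lemma twistAlg_symm_apply (x) : (twistAlg J hJ c hc0).symm x = aeval (fF' J hJ c) x := rfl

omit hc0 in
lemma aeval_fF_alpha (i : Fin n) :
    aeval (fF J hJ c) (alpha n b i) = alpha n b i + C (b i ⟨J, hJ⟩) * pP c := by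
  rw [show alpha n b i = ∑ m, C (b i m) * X m from rfl, aeval_linform]
  have : ∀ m : Fin n, C (b i m) * fF J hJ c m
      = C (b i m) * X m + if m = (⟨J, hJ⟩ : Fin n) then C (b i m) * pP c else 0 := by
    intro m
    by_cases hm : m = (⟨J, hJ⟩ : Fin n)
    · subst hm
      rw [show fF J hJ c ⟨J, hJ⟩ = X ⟨J, hJ⟩ + pP c from if_pos rfl, if_pos rfl]
      ring
    · rw [show fF J hJ c m = X m from if_neg hm, if_neg hm]
      ring
  rw [Finset.sum_congr rfl fun m _ => this m, Finset.sum_add_distrib,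
    Finset.sum_ite_eq' Finset.univ (⟨J, hJ⟩ : Fin n)]
  simp [alpha]

end Twist
end Bott

namespace Bott
section Twist2
variable {n : ℕ} (b : Mat n) (J : ℕ) (hJ : J < n) (c : Fin n → ℤ)

lemma twist_alpha_lt (i : Fin n) (hi : (i : ℕ) < J) :
    alpha n (twistMat b J hJ c) i = alpha n b i := by
  unfold alpha
  refine Finset.sum_congr rfl fun m _ => ?_
  unfold twistMat
  rw [if_neg (by omega), if_neg (by omega)]

lemma twist_alpha_J :
    alpha n (twistMat b J hJ c) ⟨J, hJ⟩ = alpha n b ⟨J, hJ⟩ - 2 * pP c := by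
  unfold alpha pP
  rw [Finset.mul_sum, ← Finset.sum_sub_distrib]
  refine Finset.sum_congr rfl fun m _ => ?_
  unfold twistMat
  rw [if_pos rfl, map_sub, map_mul, show (C 2 : MvPolynomial (Fin n) ℤ) = 2 from map_ofNat C 2]
  ring

lemma twist_alpha_gt (i : Fin n) (hi : J < (i : ℕ)) :
    alpha n (twistMat b J hJ c) i = alpha n b i + C (b i ⟨J, hJ⟩) * pP c := by
  unfold alpha pP
  rw [Finset.mul_sum, ← Finset.sum_add_distrib]
  refine Finset.sum_congr rfl fun m _ => ?_
  unfold twistMat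
  rw [if_neg (by omega), if_pos hi, map_add, map_mul]
  ring

/-- truncation substitution killing the variables `≥ J` -/
noncomputable def trunc : MvPolynomial (Fin n) ℤ →ₐ[ℤ] MvPolynomial (Fin n) ℤ :=
  aeval (fun i : Fin n => if (i : ℕ) < J then X i else 0)

lemma trunc_linform (d : Fin n → ℤ) (hd : ∀ m : Fin n, ¬ ((m : ℕ) < J) → d m = 0) :
    trunc (n := n) J (∑ m, C (d m) * X m) = ∑ m, C (d m) * X m :=
  aeval_linform_low _ _ J (fun m hm => if_pos hm) hd

lemma trunc_alpha (hb : SLT b) (i : Fin n) (hi : (i : ℕ) ≤ J) :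
    trunc (n := n) J (alpha n b i) = alpha n b i := by
  refine trunc_linform J (b i) fun m hm => ?_
  by_contra h
  exact hm (lt_of_lt_of_le (hb i m h) hi)

end Twist2

set_option maxHeartbeats 2000000 in
set_option synthInstance.maxHeartbeats 400000 in
/-- **Twisting.** If `v ∈ F_{j−1}(B)` satisfies `v(β_j − v) = 0` in
`R_B` (0-based: `j = J + 1`), then there is a strictly lower triangular matrix `B'`
with `β'_i = β_i` for `i < j` and `β'_j = β_j − 2v` (identifying `y'_m ↔ y_m`),
together with a graded ring isomorphism `g : R_B → R_{B'}` restricting to the identity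
on the first `j − 1` generators. -/
theorem stmt_5 (n : ℕ) (hn : 1 ≤ n) (b : Mat n) (hb : SLT b)
    (J : ℕ) (hJ : J < n) (v : BRing n b) (hv : v ∈ F n b J)
    (hvv : v * (bal n b ⟨J, hJ⟩ - v) = 0) :
    ∃ b' : Mat n, SLT b' ∧
      (∀ i : Fin n, (i : ℕ) < J → ∀ m, b' i m = b i m) ∧
      ((∑ m, b' ⟨J, hJ⟩ m • bx n b m) = bal n b ⟨J, hJ⟩ - 2 • v) ∧
      ∃ g : BRing n b ≃+* BRing n b', IsGraded n b b' g ∧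
        ∀ i : Fin n, (i : ℕ) < J → g (bx n b i) = bx n b' i := by
  classical
  obtain ⟨l, hl, rfl⟩ := (Finsupp.mem_span_image_iff_linearCombination ℤ).mp hv
  set c : Fin n → ℤ := fun m => l m with hc
  have hc0 : ∀ m : Fin n, ¬ ((m : ℕ) < J) → c m = 0 := by
    intro m hm
    by_contra h
    exact hm (hl (Finsupp.mem_support_iff.mpr h))
  have hvp : Finsupp.linearCombination ℤ (bx n b) l = bmk n b (pP c) := by
    rw [show pP c = ∑ m, C (c m) * X m from rfl, bmk_linform,
      Finsupp.linearCombination_apply, Finsupp.sum_fintype]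
    exact fun i => zero_smul ℤ _
  rw [hvp] at hvv
  set jJ : Fin n := ⟨J, hJ⟩ with hjJ
  have hbJJ : b jJ jJ = 0 := by
    by_contra h
    exact absurd (hb jJ jJ h) (lt_irrefl _)
  have hbiJ : ∀ i : Fin n, (i : ℕ) ≤ J → b i jJ = 0 := by
    intro i hi
    by_contra h
    have := hb i jJ h
    simp only [hjJ] at this
    omega
  set b2 : Mat n := twistMat b J hJ c with hb2
  -- SLT
  have hslt : SLT b2 := by
    intro i m h
    by_cases h1 : (i : ℕ) = J
    · rw [hb2, twistMat, if_pos h1] at h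
      by_cases hm : (m : ℕ) < J
      · omega
      · rw [hc0 m hm] at h
        have : b i m ≠ 0 := by intro h'; rw [h'] at h; simp at h
        exact hb i m this
    · by_cases h2 : J < (i : ℕ)
      · rw [hb2, twistMat, if_neg h1, if_pos h2] at h
        by_cases hm : (m : ℕ) < J
        · omega
        · rw [hc0 m hm] at h
          have : b i m ≠ 0 := by intro h'; rw [h'] at h; simp at h
          exact hb i m this
      · rw [hb2, twistMat, if_neg h1, if_neg h2] at h
        exact hb i m h
  have hrows : ∀ i : Fin n, (i : ℕ) < J → ∀ m, b2 i m = b i m := by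
    intro i hi m
    rw [hb2, twistMat, if_neg (by omega), if_neg (by omega)]
  -- the β'_J computation
  have hsum : (∑ m, b2 jJ m • bx n b m) = bal n b jJ - 2 • bmk n b (pP c) := by
    have hval : ∀ m, b2 jJ m = b jJ m - 2 * c m := fun m => if_pos rfl
    calc ∑ m, b2 jJ m • bx n b m
        = ∑ m, (b jJ m • bx n b m - (2 * c m) • bx n b m) := by
          refine Finset.sum_congr rfl fun m _ => ?_
          rw [hval m, sub_smul]
      _ = (∑ m, b jJ m • bx n b m) - ∑ m, (2 * c m) • bx n b m :=
          Finset.sum_sub_distrib _ _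
      _ = bal n b jJ - 2 • bmk n b (pP c) := by
          rw [← bal_eq_sum]
          congr 1
          rw [show pP c = ∑ m, C (c m) * X m from rfl, bmk_linform, two_smul,
            ← Finset.sum_add_distrib]
          refine Finset.sum_congr rfl fun m _ => ?_
          rw [two_mul, add_smul]
  -- q ∈ I_b
  have hq_b : pP c * (alpha n b jJ - pP c) ∈ bottIdeal n b := by
    have h0 : bmk n b (pP c * (alpha n b jJ - pP c)) = 0 := by
      rw [map_mul, map_sub]
      exact hvv
    exact Ideal.Quotient.eq_zero_iff_mem.mp h0
  -- q ∈ I_b2, via truncation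
  have hq_b2 : pP c * (alpha n b jJ - pP c) ∈ bottIdeal n b2 := by
    have htrq : trunc (n := n) J (pP c * (alpha n b jJ - pP c))
        = pP c * (alpha n b jJ - pP c) := by
      rw [map_mul, map_sub, trunc_alpha b J hb jJ (le_refl J),
        show pP c = ∑ m, C (c m) * X m from rfl, trunc_linform J c hc0]
    have hle : (bottIdeal n b).map (trunc (n := n) J).toRingHom ≤ bottIdeal n b2 := by
      rw [bottIdeal, Ideal.map_span]
      rw [Ideal.span_le]
      rintro _ ⟨_, ⟨i, rfl⟩, rfl⟩
      simp only [AlgHom.toRingHom_eq_coe, RingHom.coe_coe, SetLike.mem_coe]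
      rw [map_sub, map_pow, map_mul]
      by_cases hi : (i : ℕ) < J
      · rw [show trunc (n := n) J (X i) = X i from by unfold trunc; rw [aeval_X]; exact if_pos hi,
          trunc_alpha b J hb i (le_of_lt hi), ← twist_alpha_lt b J hJ c i hi]
        exact Ideal.subset_span ⟨i, rfl⟩
      · rw [show trunc (n := n) J (X i) = 0 from by unfold trunc; rw [aeval_X]; exact if_neg hi]
        simp
    have := Ideal.mem_map_of_mem (trunc (n := n) J).toRingHom hq_b
    rw [show (trunc (n := n) J).toRingHom (pP c * (alpha n b jJ - pP c))
        = trunc (n := n) J (pP c * (alpha n b jJ - pP c)) from rfl, htrq] at this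
    exact hle this
  -- the polynomial ring automorphism
  set E : MvPolynomial (Fin n) ℤ ≃ₐ[ℤ] MvPolynomial (Fin n) ℤ := twistAlg J hJ c hc0 with hE
  set Er : MvPolynomial (Fin n) ℤ →+* MvPolynomial (Fin n) ℤ :=
    (E.toRingEquiv : MvPolynomial (Fin n) ℤ →+* MvPolynomial (Fin n) ℤ) with hEr
  have hErX : ∀ i : Fin n, Er (X i) = fF J hJ c i := fun i => aeval_X _ i
  have hErXne : ∀ i : Fin n, i ≠ jJ → Er (X i) = X i := by
    intro i hi
    rw [hErX i]
    exact if_neg hi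
  have hErXJ : Er (X jJ) = X jJ + pP c := by
    rw [hErX jJ]
    exact if_pos rfl
  have hErp : Er (pP c) = pP c := aeval_fF_p J hJ c hc0
  have hEral : ∀ i : Fin n, Er (alpha n b i) = alpha n b i + C (b i jJ) * pP c :=
    fun i => aeval_fF_alpha b J hJ c i
  -- generators
  have hEgen_ne : ∀ i : Fin n, (i : ℕ) ≠ J →
      Er (X i ^ 2 - alpha n b i * X i) = X i ^ 2 - alpha n b2 i * X i := by
    intro i hi
    have hine : i ≠ jJ := by
      intro h
      rw [h] at hi
      exact hi rfl
    rw [map_sub, map_pow, map_mul, hErXne i hine, hEral i]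
    rcases lt_or_gt_of_ne (hi : (i : ℕ) ≠ J) with h | h
    · rw [hbiJ i (le_of_lt h), twist_alpha_lt b J hJ c i h]
      simp
    · rw [twist_alpha_gt b J hJ c i h]
  have hEgenJ : Er (X jJ ^ 2 - alpha n b jJ * X jJ)
      = (X jJ ^ 2 - alpha n b2 jJ * X jJ) - pP c * (alpha n b jJ - pP c) := by
    rw [map_sub, map_pow, map_mul, hErXJ, hEral jJ, hbJJ, map_zero, zero_mul, add_zero,
      show alpha n b2 jJ = alpha n b jJ - 2 * pP c from twist_alpha_J b J hJ c]
    ring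
  have hErq : Er (pP c * (alpha n b jJ - pP c)) = pP c * (alpha n b jJ - pP c) := by
    rw [map_mul, map_sub, hErp, hEral jJ, hbJJ, map_zero, zero_mul, add_zero]
  -- the ideal correspondence
  have hmap : bottIdeal n b2 = (bottIdeal n b).map Er := by
    refine le_antisymm ?_ ?_
    · rw [bottIdeal, Ideal.span_le]
      rintro _ ⟨i, rfl⟩
      show X i ^ 2 - alpha n b2 i * X i ∈ Ideal.map Er (bottIdeal n b)
      by_cases hi : (i : ℕ) = J
      · have hieq : i = jJ := Fin.ext hi
        have hkey : X jJ ^ 2 - alpha n b2 jJ * X jJ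
            = Er (X jJ ^ 2 - alpha n b jJ * X jJ) + pP c * (alpha n b jJ - pP c) := by
          rw [hEgenJ]
          ring
        rw [hieq, hkey]
        refine Ideal.add_mem _ (Ideal.mem_map_of_mem Er (Ideal.subset_span ⟨jJ, rfl⟩)) ?_
        rw [← hErq]
        exact Ideal.mem_map_of_mem Er hq_b
      · rw [← hEgen_ne i hi]
        exact Ideal.mem_map_of_mem Er (Ideal.subset_span ⟨i, rfl⟩)
    · rw [bottIdeal, Ideal.map_span, Ideal.span_le]
      rintro _ ⟨_, ⟨i, rfl⟩, rfl⟩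
      show Er (X i ^ 2 - alpha n b i * X i) ∈ bottIdeal n b2
      by_cases hi : (i : ℕ) = J
      · have hieq : i = jJ := Fin.ext hi
        rw [hieq, hEgenJ]
        exact Ideal.sub_mem _ (Ideal.subset_span ⟨jJ, rfl⟩) hq_b2
      · rw [hEgen_ne i hi]
        exact Ideal.subset_span ⟨i, rfl⟩
  -- the quotient isomorphism
  set g : BRing n b ≃+* BRing n b2 :=
    Ideal.quotientEquiv (bottIdeal n b) (bottIdeal n b2) E.toRingEquiv hmap with hg
  have hgmk : ∀ x, g (bmk n b x) = bmk n b2 (Er x) := fun x =>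
    Ideal.quotientEquiv_mk (bottIdeal n b) (bottIdeal n b2) E.toRingEquiv hmap x
  have hgsymm : ∀ x, g.symm (bmk n b2 x) = bmk n b (aeval (fF' J hJ c) x) := fun x =>
    Ideal.quotientEquiv_symm_mk (bottIdeal n b) (bottIdeal n b2) E.toRingEquiv hmap x
  have hgx_ne : ∀ i : Fin n, i ≠ jJ → g (bx n b i) = bx n b2 i := by
    intro i hi
    rw [show bx n b i = bmk n b (X i) from rfl, hgmk, hErXne i hi]
    rfl
  have hgxJ : g (bx n b jJ) = bx n b2 jJ + bmk n b2 (pP c) := by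
    rw [show bx n b jJ = bmk n b (X jJ) from rfl, hgmk, hErXJ, map_add]
    rfl
  have hpH2 : ∀ a : Mat n, bmk n a (pP c) ∈ H2 n a := by
    intro a
    rw [show pP c = ∑ m, C (c m) * X m from rfl, bmk_linform]
    exact Submodule.sum_mem _ fun m _ =>
      Submodule.smul_mem _ _ (Submodule.subset_span ⟨m, rfl⟩)
  have hgraded : IsGraded n b b2 g := by
    constructor
    · intro z hz
      induction hz using Submodule.span_induction with
      | mem x hx =>
        obtain ⟨i, rfl⟩ := hx
        by_cases hi : i = jJ
        · subst hi
          rw [hgxJ]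
          exact Submodule.add_mem _ (Submodule.subset_span ⟨jJ, rfl⟩) (hpH2 b2)
        · rw [hgx_ne i hi]
          exact Submodule.subset_span ⟨i, rfl⟩
      | zero => rw [map_zero]; exact Submodule.zero_mem _
      | add x y hx hy ihx ihy => rw [map_add]; exact Submodule.add_mem _ ihx ihy
      | smul a x hx ih => rw [map_zsmul]; exact Submodule.smul_mem _ a ih
    · intro z hz
      induction hz using Submodule.span_induction with
      | mem x hx =>
        obtain ⟨i, rfl⟩ := hx
        rw [show bx n b2 i = bmk n b2 (X i) from rfl, hgsymm, aeval_X]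
        by_cases hi : i = jJ
        · rw [hi, show fF' J hJ c jJ = X jJ - pP c from if_pos rfl, map_sub]
          exact Submodule.sub_mem _ (Submodule.subset_span ⟨jJ, rfl⟩) (hpH2 b)
        · rw [show fF' J hJ c i = X i from if_neg hi]
          exact Submodule.subset_span ⟨i, rfl⟩
      | zero => rw [map_zero]; exact Submodule.zero_mem _
      | add x y hx hy ihx ihy => rw [map_add]; exact Submodule.add_mem _ ihx ihy
      | smul a x hx ih => rw [map_zsmul]; exact Submodule.smul_mem _ a ih
  refine ⟨b2, hslt, hrows, ?_, g, hgraded, ?_⟩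
  · rw [hvp]
    exact hsum
  · intro i hi
    refine hgx_ne i fun h => ?_
    rw [h, hjJ] at hi
    simp at hi

end Bott
end
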